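/- Let r ≥ 3, t ≥ 1 and n > 2(r−1)². Then χ^e(K_n^r(t)) = χ^ve(K_n^r(t)) = χ^ven(K_n^r(t)) = 2, where K_n^r(t) is the complete r-uniform n-partite hypergraph with all parts of size t. -/

import Mathlib

open Finset

open Classical in
/-- `σ^e(v) = Σ_{e ∋ v} w(e)` for a hypergraph with edge set `E`. -/
noncomputable def sigmaE {V : Type*} [Fintype V] (E : Finset (Finset V))
    (w : Finset V → ℕ) (v : V) : ℕ :=
  ∑ e ∈ E.filter (fun e => v ∈ e), w e

/-- The hypergraph with edge set `E` admits an edge weighting with weights in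
`{1,…,k}` such that `σ^e` is a proper vertex coloring: every edge with at least
two vertices contains two vertices with distinct colors. -/
def HasNSDEdgeWeighting {V : Type*} [Fintype V] (E : Finset (Finset V)) (k : ℕ) : Prop :=
  ∃ w : Finset V → ℕ, (∀ e ∈ E, 1 ≤ w e ∧ w e ≤ k) ∧
    ∀ e ∈ E, 2 ≤ e.card → ∃ u ∈ e, ∃ v ∈ e, sigmaE E w u ≠ sigmaE E w v

open Classical in
/-- `σ^ve(v) = w(v) + Σ_{e ∋ v} w(e)` for a total weighting of a hypergraph. -/
noncomputable def sigmaVE {V : Type*} [Fintype V] (E : Finset (Finset V))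
    (wV : V → ℕ) (wE : Finset V → ℕ) (v : V) : ℕ :=
  wV v + ∑ e ∈ E.filter (fun e => v ∈ e), wE e

open Classical in
/-- `σ^ven(v) = w(v) + Σ_{e ∋ v} w(e) + Σ_{u ∈ N(v)} w(u)`, where
`N(v) = {u ≠ v : some edge contains both u and v}`. -/
noncomputable def sigmaVEN {V : Type*} [Fintype V] (E : Finset (Finset V))
    (wV : V → ℕ) (wE : Finset V → ℕ) (v : V) : ℕ :=
  sigmaVE E wV wE v +
    ∑ u ∈ Finset.univ.filter (fun u => u ≠ v ∧ ∃ e ∈ E, v ∈ e ∧ u ∈ e), wV u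

/-- The hypergraph with edge set `E` admits a total weighting with weights in
`{1,…,k}` such that `σ^ve` is a proper vertex coloring. -/
def HasNSDTotalWeightingVE {V : Type*} [Fintype V] (E : Finset (Finset V)) (k : ℕ) : Prop :=
  ∃ wV : V → ℕ, ∃ wE : Finset V → ℕ,
    (∀ v : V, 1 ≤ wV v ∧ wV v ≤ k) ∧ (∀ e ∈ E, 1 ≤ wE e ∧ wE e ≤ k) ∧
    ∀ e ∈ E, 2 ≤ e.card →
      ∃ u ∈ e, ∃ v ∈ e, sigmaVE E wV wE u ≠ sigmaVE E wV wE v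

/-- The hypergraph with edge set `E` admits a total weighting with weights in
`{1,…,k}` such that `σ^ven` is a proper vertex coloring. -/
def HasNFSDTotalWeighting {V : Type*} [Fintype V] (E : Finset (Finset V)) (k : ℕ) : Prop :=
  ∃ wV : V → ℕ, ∃ wE : Finset V → ℕ,
    (∀ v : V, 1 ≤ wV v ∧ wV v ≤ k) ∧ (∀ e ∈ E, 1 ≤ wE e ∧ wE e ≤ k) ∧
    ∀ e ∈ E, 2 ≤ e.card →
      ∃ u ∈ e, ∃ v ∈ e, sigmaVEN E wV wE u ≠ sigmaVEN E wV wE v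

/-- The edge set of the complete `r`-uniform `n`-partite hypergraph with parts
`{i} × Fin t` (`i : Fin n`), each of size `t`. -/
def completePartiteEdges (n r t : ℕ) : Finset (Finset (Fin n × Fin t)) :=
  (Finset.univ.powersetCard r).filter
    (fun e => ∀ u ∈ e, ∀ v ∈ e, u ≠ v → (u : Fin n × Fin t).1 ≠ v.1)

/-!
A product of a permutation of the parts with a permutation of `Fin t` is an automorphism of
`K_n^r(t)`, and these act transitively on the vertices. Hence with all weights equal to `1` each
of the three sums is constant, so none of the three parameters is `1`.

Put weight `2` on the edges whose set of parts lies in a family `𝒮` of `r`-sets of parts, and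
weight `1` elsewhere. An `r`-set of parts `S ∋ v.1` carries exactly `t ^ (r - 1)` edges through
`v`, so `σ^e(v) = deg + t ^ (r - 1) · d(v.1)`, where `d` is the degree of a part in `𝒮`.
It therefore suffices that every `r`-set of parts contains two parts of different `𝒮`-degree. With
`m = n + 2 - r`, let the core be the `r - 2` parts `≥ m` and let `𝒮` consist of the sets
`core ∪ {i, j}` with `i < j < m ≤ i + j` (a half graph on the parts below `m`). Core parts have
degree `|𝒮|`, while a part `q < m` is missed by some member of `𝒮` and has degree `q - 1` or `q`.
So an `r`-set of constant degree would consist of at least three parts below `m` with equal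
degree, which is impossible. Vertex weights `1` give the two total versions, the neighbourhood
sums being constant by transitivity.
-/

section Automorphism

variable {V : Type*} [DecidableEq V] {E : Finset (Finset V)} {π : V ≃ V}

def IsVertexTransitive (E : Finset (Finset V)) : Prop :=
  ∀ a b : V, ∃ π : V ≃ V, (∀ e, e.image π ∈ E ↔ e ∈ E) ∧ π a = b

lemma image_symm_mem_iff (hπ : ∀ e, e.image π ∈ E ↔ e ∈ E) (e : Finset V) :
    e.image π.symm ∈ E ↔ e ∈ E := by
  rw [← hπ, image_image, Equiv.self_comp_symm, image_id]

lemma card_filter_mem_apply_eq (hπ : ∀ e, e.image π ∈ E ↔ e ∈ E) (v : V) :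
    #{e ∈ E | π v ∈ e} = #{e ∈ E | v ∈ e} := by
  refine card_nbij' (·.image π.symm) (·.image π) ?_ ?_ ?_ ?_ <;> intro e he <;>
    simp_all [image_image, image_symm_mem_iff hπ]
  exact ⟨π v, he.2, by simp⟩

lemma IsVertexTransitive.card_filter_mem_eq (hE : IsVertexTransitive E) (a b : V) :
    #{e ∈ E | a ∈ e} = #{e ∈ E | b ∈ e} := by
  obtain ⟨π, hπ, rfl⟩ := hE a b
  exact (card_filter_mem_apply_eq hπ a).symm

variable [Fintype V]

def adjFinset (E : Finset (Finset V)) (v : V) : Finset V :=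
  {u | u ≠ v ∧ ∃ e ∈ E, v ∈ e ∧ u ∈ e}

lemma apply_mem_adjFinset (hπ : ∀ e, e.image π ∈ E ↔ e ∈ E) {u v : V}
    (hu : u ∈ adjFinset E v) : π u ∈ adjFinset E (π v) := by
  simp only [adjFinset, mem_filter, mem_univ, true_and] at hu ⊢
  obtain ⟨hne, e, he, hve, hue⟩ := hu
  exact ⟨π.injective.ne hne, e.image π, (hπ e).2 he, mem_image_of_mem π hve,
    mem_image_of_mem π hue⟩

lemma card_adjFinset_apply_eq (hπ : ∀ e, e.image π ∈ E ↔ e ∈ E) (v : V) :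
    #(adjFinset E (π v)) = #(adjFinset E v) :=
  card_nbij' π.symm π
    (fun u hu => by simpa using apply_mem_adjFinset (π := π.symm) (image_symm_mem_iff hπ) hu)
    (fun _ hu => apply_mem_adjFinset hπ hu) (fun u _ => by simp) (fun u _ => by simp)

lemma IsVertexTransitive.card_adjFinset_eq (hE : IsVertexTransitive E) (a b : V) :
    #(adjFinset E a) = #(adjFinset E b) := by
  obtain ⟨π, hπ, rfl⟩ := hE a b
  exact (card_adjFinset_apply_eq hπ a).symm

end Automorphism

section Weighting

variable {V : Type*} [Fintype V] {E : Finset (Finset V)} {k : ℕ}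

lemma sigmaVE_eq (wV : V → ℕ) (wE : Finset V → ℕ) (v : V) :
    sigmaVE E wV wE v = wV v + sigmaE E wE v := rfl

lemma HasNSDEdgeWeighting.hasNSDTotalWeightingVE (h : HasNSDEdgeWeighting E k) (hk : 1 ≤ k) :
    HasNSDTotalWeightingVE E k := by
  obtain ⟨w, hw, hsep⟩ := h
  refine ⟨fun _ => 1, w, fun _ => ⟨le_rfl, hk⟩, hw, fun e he he2 => ?_⟩
  obtain ⟨u, hu, z, hz, hne⟩ := hsep e he he2
  exact ⟨u, hu, z, hz, by simpa [sigmaVE_eq] using hne⟩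

variable [DecidableEq V]

lemma sigmaE_eq_sum (w : Finset V → ℕ) (v : V) : sigmaE E w v = ∑ e ∈ E with v ∈ e, w e := by
  rw [sigmaE]
  congr 1
  exact filter_congr_decidable _ _ _

lemma sigmaE_eq_card_of_forall_eq_one {w : Finset V → ℕ} (hw : ∀ e ∈ E, w e = 1) (v : V) :
    sigmaE E w v = #{e ∈ E | v ∈ e} := by
  rw [sigmaE_eq_sum, card_eq_sum_ones]
  exact sum_congr rfl fun e he => hw e (mem_filter.1 he).1

lemma sigmaVEN_eq_of_forall_eq_one (wE : Finset V → ℕ) {wV : V → ℕ} (hwV : ∀ v, wV v = 1)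
    (v : V) : sigmaVEN E wV wE v = sigmaVE E wV wE v + #(adjFinset E v) := by
  simp only [sigmaVEN, adjFinset, hwV, card_eq_sum_ones]
  congr 2
  exact filter_congr_decidable _ _ _

lemma IsVertexTransitive.hasNFSDTotalWeighting (hE : IsVertexTransitive E)
    (h : HasNSDEdgeWeighting E k) (hk : 1 ≤ k) : HasNFSDTotalWeighting E k := by
  obtain ⟨w, hw, hsep⟩ := h
  refine ⟨fun _ => 1, w, fun _ => ⟨le_rfl, hk⟩, hw, fun e he he2 => ?_⟩
  obtain ⟨u, hu, z, hz, hne⟩ := hsep e he he2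
  refine ⟨u, hu, z, hz, ?_⟩
  simpa [sigmaVEN_eq_of_forall_eq_one, sigmaVE_eq, hE.card_adjFinset_eq u z] using hne

lemma IsVertexTransitive.not_hasNSDEdgeWeighting_one (hE : IsVertexTransitive E)
    (hE₂ : ∃ e ∈ E, 2 ≤ e.card) : ¬ HasNSDEdgeWeighting E 1 := by
  rintro ⟨w, hw, hsep⟩
  obtain ⟨e, he, he₂⟩ := hE₂
  obtain ⟨u, -, z, -, hne⟩ := hsep e he he₂
  have hw₁ : ∀ e ∈ E, w e = 1 := fun e he => by have := hw e he; omega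
  simp only [sigmaE_eq_card_of_forall_eq_one hw₁, hE.card_filter_mem_eq u z] at hne
  exact hne rfl

lemma IsVertexTransitive.not_hasNSDTotalWeightingVE_one (hE : IsVertexTransitive E)
    (hE₂ : ∃ e ∈ E, 2 ≤ e.card) : ¬ HasNSDTotalWeightingVE E 1 := by
  rintro ⟨wV, wE, hwV, hwE, hsep⟩
  obtain ⟨e, he, he₂⟩ := hE₂
  obtain ⟨u, -, z, -, hne⟩ := hsep e he he₂
  have hwV₁ : ∀ v, wV v = 1 := fun v => by have := hwV v; omega
  have hwE₁ : ∀ e ∈ E, wE e = 1 := fun e he => by have := hwE e he; omega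
  simp only [sigmaVE_eq, hwV₁, sigmaE_eq_card_of_forall_eq_one hwE₁,
    hE.card_filter_mem_eq u z] at hne
  exact hne rfl

lemma IsVertexTransitive.not_hasNFSDTotalWeighting_one (hE : IsVertexTransitive E)
    (hE₂ : ∃ e ∈ E, 2 ≤ e.card) : ¬ HasNFSDTotalWeighting E 1 := by
  rintro ⟨wV, wE, hwV, hwE, hsep⟩
  obtain ⟨e, he, he₂⟩ := hE₂
  obtain ⟨u, -, z, -, hne⟩ := hsep e he he₂
  have hwV₁ : ∀ v, wV v = 1 := fun v => by have := hwV v; omega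
  have hwE₁ : ∀ e ∈ E, wE e = 1 := fun e he => by have := hwE e he; omega
  simp only [sigmaVEN_eq_of_forall_eq_one wE hwV₁, sigmaVE_eq, hwV₁,
    sigmaE_eq_card_of_forall_eq_one hwE₁, hE.card_filter_mem_eq u z,
    hE.card_adjFinset_eq u z] at hne
  exact hne rfl

end Weighting

def familyDegree {α : Type*} [DecidableEq α] (𝒮 : Finset (Finset α)) (a : α) : ℕ :=
  #{S ∈ 𝒮 | a ∈ S}

section HalfGraph

variable {n m : ℕ}

def halfGraphCore (n m : ℕ) : Finset (Fin n) := {q | m ≤ (q : ℕ)}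

def halfGraphFamily (n m : ℕ) : Finset (Finset (Fin n)) :=
  ({p : Fin n × Fin n | p.1 < p.2 ∧ (p.2 : ℕ) < m ∧ m ≤ (p.1 : ℕ) + p.2} : Finset _).image
    fun p => insert p.1 (insert p.2 (halfGraphCore n m))

lemma mem_halfGraphCore {q : Fin n} : q ∈ halfGraphCore n m ↔ m ≤ (q : ℕ) := by
  simp [halfGraphCore]

lemma card_halfGraphCore : (halfGraphCore n m).card = n - m := by
  have hlow := Fin.card_filter_val_lt (n := n) (m := m)
  have hsplit := card_filter_add_card_filter_not (s := univ) fun q : Fin n => (q : ℕ) < m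
  simp only [card_univ, Fintype.card_fin, not_lt] at hsplit
  rw [halfGraphCore]
  omega

lemma mem_halfGraphFamily {S : Finset (Fin n)} :
    S ∈ halfGraphFamily n m ↔ ∃ i j : Fin n, i < j ∧ (j : ℕ) < m ∧ m ≤ (i : ℕ) + j ∧
      insert i (insert j (halfGraphCore n m)) = S := by
  simp [halfGraphFamily, and_assoc]

lemma insert_insert_mem_halfGraphFamily {i j : Fin n} (hij : i ≠ j) (hi : (i : ℕ) < m)
    (hj : (j : ℕ) < m) (hsum : m ≤ (i : ℕ) + j) :
    insert i (insert j (halfGraphCore n m)) ∈ halfGraphFamily n m := by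
  rcases lt_or_gt_of_ne hij with h | h
  · exact mem_halfGraphFamily.2 ⟨i, j, h, hj, hsum, rfl⟩
  · exact mem_halfGraphFamily.2 ⟨j, i, h, hi, by omega, insert_comm _ _ _⟩

lemma card_of_mem_halfGraphFamily {S : Finset (Fin n)} (hS : S ∈ halfGraphFamily n m) :
    S.card = n - m + 2 := by
  obtain ⟨i, j, hij, hjm, -, rfl⟩ := mem_halfGraphFamily.1 hS
  have hi : i ∉ halfGraphCore n m := fun h => by rw [mem_halfGraphCore] at h; omega
  have hj : j ∉ halfGraphCore n m := fun h => by rw [mem_halfGraphCore] at h; omega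
  rw [card_insert_of_notMem (by simp [hij.ne, hi]), card_insert_of_notMem hj, card_halfGraphCore]

lemma familyDegree_halfGraphFamily_of_mem_core {q : Fin n} (hq : q ∈ halfGraphCore n m) :
    familyDegree (halfGraphFamily n m) q = (halfGraphFamily n m).card := by
  rw [familyDegree, filter_true_of_mem]
  intro S hS
  obtain ⟨i, j, -, -, -, rfl⟩ := mem_halfGraphFamily.1 hS
  exact mem_insert_of_mem (mem_insert_of_mem hq)

lemma familyDegree_halfGraphFamily_lt (hm : 5 ≤ m) (hmn : m ≤ n) {q : Fin n} (hq : (q : ℕ) < m) :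
    familyDegree (halfGraphFamily n m) q < (halfGraphFamily n m).card := by
  obtain ⟨i, j, hij, hjm, hsum, hqi, hqj⟩ :
      ∃ i j : ℕ, i < j ∧ j < m ∧ m ≤ i + j ∧ i ≠ q ∧ j ≠ q := by
    rcases (show (q : ℕ) < m - 2 ∨ q = m - 2 ∨ q = m - 1 by omega) with h | h | h
    exacts [⟨m - 2, m - 1, by omega⟩, ⟨m - 3, m - 1, by omega⟩, ⟨m - 3, m - 2, by omega⟩]
  refine card_lt_card (filter_ssubset.2 ⟨_, insert_insert_mem_halfGraphFamily
    (i := ⟨i, by omega⟩) (j := ⟨j, by omega⟩) (Fin.ne_of_val_ne hij.ne) (show i < m by omega)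
    hjm hsum, ?_⟩)
  simp only [mem_insert, Fin.ext_iff, mem_halfGraphCore, not_or]
  omega

lemma familyDegree_halfGraphFamily_eq (hmn : m ≤ n) {q : Fin n} (hq : (q : ℕ) < m) :
    familyDegree (halfGraphFamily n m) q = #((Ico (m - q) m).erase (q : ℕ)) := by
  have hq_core : q ∉ halfGraphCore n m := fun h => by rw [mem_halfGraphCore] at h; omega
  set P : Finset (Fin n) := {j | j ≠ q ∧ (j : ℕ) < m ∧ m ≤ (q : ℕ) + j}
  have hP : P.map Fin.valEmbedding = (Ico (m - q) m).erase q := by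
    ext j
    simp only [P, mem_map, mem_filter, mem_univ, true_and, Fin.valEmbedding_apply, mem_erase,
      mem_Ico, ne_eq, Fin.ext_iff]
    constructor
    · rintro ⟨j, ⟨hjq, hjm, hsum⟩, rfl⟩
      omega
    · rintro ⟨hjq, hsum, hjm⟩
      exact ⟨⟨j, by omega⟩, ⟨hjq, hjm, show m ≤ (q : ℕ) + j by omega⟩, rfl⟩
  rw [familyDegree, ← hP, card_map]
  symm
  refine card_nbij (fun j => insert q (insert j (halfGraphCore n m))) (fun j hj => ?_)
    (fun j₁ hj₁ j₂ hj₂ h => ?_) (fun S hS => ?_)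
  · obtain ⟨hjq, hjm, hsum⟩ := mem_filter.1 hj |>.2
    exact mem_filter.2 ⟨insert_insert_mem_halfGraphFamily (Ne.symm hjq) hq hjm hsum,
      mem_insert_self _ _⟩
  · obtain ⟨hjq₁, hjm₁, -⟩ := (mem_filter.1 hj₁).2
    have : j₁ ∈ insert q (insert j₂ (halfGraphCore n m)) := by
      rw [← show insert q (insert j₁ _) = insert q (insert j₂ _) from h]
      exact mem_insert_of_mem (mem_insert_self _ _)
    simp only [mem_insert, hjq₁, false_or, mem_halfGraphCore] at this
    exact this.resolve_right (by omega)
  · obtain ⟨hS, hqS⟩ := mem_filter.1 hS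
    obtain ⟨i, j, hij, hjm, hsum, rfl⟩ := mem_halfGraphFamily.1 hS
    simp only [mem_insert, hq_core, or_false] at hqS
    rcases hqS with rfl | rfl
    · exact ⟨j, mem_filter.2 ⟨mem_univ _, hij.ne', hjm, hsum⟩, rfl⟩
    · exact ⟨i, mem_filter.2 ⟨mem_univ _, hij.ne, by omega, by omega⟩, insert_comm _ _ _⟩

lemma familyDegree_halfGraphFamily_bounds (hmn : m ≤ n) {q : Fin n} (hq : (q : ℕ) < m) :
    (q : ℕ) - 1 ≤ familyDegree (halfGraphFamily n m) q ∧
      familyDegree (halfGraphFamily n m) q ≤ q := by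
  have hIco : #(Ico (m - q) m) = q := by rw [Nat.card_Ico]; omega
  have hlower := pred_card_le_card_erase (s := Ico (m - q) m) (a := (q : ℕ))
  have hupper := card_erase_le (s := Ico (m - q) m) (a := (q : ℕ))
  rw [hIco] at hlower hupper
  rw [familyDegree_halfGraphFamily_eq hmn hq]
  exact ⟨hlower, hupper⟩

lemma exists_familyDegree_halfGraphFamily_ne (hm : 5 ≤ m) (hmn : m < n) {T : Finset (Fin n)}
    (hT : T.card = n - m + 2) :
    ∃ a ∈ T, ∃ b ∈ T,
      familyDegree (halfGraphFamily n m) a ≠ familyDegree (halfGraphFamily n m) b := by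
  by_contra! hconst
  obtain ⟨q, hqT, hq⟩ : ∃ q ∈ T, (q : ℕ) < m := by
    by_contra! h
    have := card_le_card fun a ha => mem_halfGraphCore.2 (h a ha)
    rw [card_halfGraphCore] at this
    omega
  have hlow : ∀ a ∈ T, (a : ℕ) < m := by
    intro a ha
    by_contra! hma
    have := familyDegree_halfGraphFamily_lt hm hmn.le hq
    rw [hconst q hqT a ha,
      familyDegree_halfGraphFamily_of_mem_core (mem_halfGraphCore.2 hma)] at this
    exact lt_irrefl _ this
  obtain ⟨a, ha, b, hb, c, hc, hab, hac, hbc⟩ := two_lt_card.1 (by omega : 2 < T.card)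
  have := familyDegree_halfGraphFamily_bounds hmn.le (hlow a ha)
  have := familyDegree_halfGraphFamily_bounds hmn.le (hlow b hb)
  have := familyDegree_halfGraphFamily_bounds hmn.le (hlow c hc)
  have := hconst a ha b hb
  have := hconst a ha c hc
  have := Fin.val_injective.ne hab
  have := Fin.val_injective.ne hac
  have := Fin.val_injective.ne hbc
  omega

end HalfGraph

section CompletePartite

variable {n r t : ℕ}

lemma mem_completePartiteEdges {e : Finset (Fin n × Fin t)} :
    e ∈ completePartiteEdges n r t ↔ e.card = r ∧ ∀ u ∈ e, ∀ v ∈ e, u ≠ v → u.1 ≠ v.1 := by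
  simp [completePartiteEdges]

lemma image_prodCongr_mem_completePartiteEdges_iff (σ : Equiv.Perm (Fin n))
    (τ : Equiv.Perm (Fin t)) (e : Finset (Fin n × Fin t)) :
    e.image (σ.prodCongr τ) ∈ completePartiteEdges n r t ↔ e ∈ completePartiteEdges n r t := by
  have hπ : Function.Injective (Prod.map σ τ) := (σ.prodCongr τ).injective
  simp only [mem_completePartiteEdges, Equiv.prodCongr_apply, card_image_of_injective _ hπ,
    forall_mem_image, hπ.ne_iff, Prod.map_fst, σ.injective.ne_iff]

lemma completePartiteEdges_isVertexTransitive :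
    IsVertexTransitive (completePartiteEdges n r t) := fun a b =>
  ⟨(Equiv.swap a.1 b.1).prodCongr (Equiv.swap a.2 b.2),
    image_prodCongr_mem_completePartiteEdges_iff _ _,
    Prod.ext (Equiv.swap_apply_left _ _) (Equiv.swap_apply_left _ _)⟩

lemma image_graph_mem_completePartiteEdges {S : Finset (Fin n)} (hS : S.card = r)
    (g : Fin n → Fin t) : S.image (fun a => (a, g a)) ∈ completePartiteEdges n r t := by
  rw [mem_completePartiteEdges, card_image_of_injective _ fun a b h => congrArg Prod.fst h]
  refine ⟨hS, ?_⟩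
  simp only [forall_mem_image]
  intro a _ b _ hab
  exact fun h => hab (by rw [h])

lemma exists_mem_completePartiteEdges (hrn : r ≤ n) (ht : 1 ≤ t) :
    ∃ e ∈ completePartiteEdges n r t, e.card = r := by
  obtain ⟨S, -, hS⟩ := exists_subset_card_eq (s := (univ : Finset (Fin n))) (by simpa using hrn)
  have he := image_graph_mem_completePartiteEdges (t := t) hS fun _ => ⟨0, ht⟩
  exact ⟨_, he, (mem_completePartiteEdges.1 he).1⟩

lemma card_image_fst_of_mem {e : Finset (Fin n × Fin t)} (he : e ∈ completePartiteEdges n r t) :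
    (e.image Prod.fst).card = r := by
  obtain ⟨hcard, hpart⟩ := mem_completePartiteEdges.1 he
  rw [card_image_of_injOn fun u hu v hv h => by_contra fun huv => hpart u hu v hv huv h, hcard]

lemma exists_image_graph_eq {e : Finset (Fin n × Fin t)} (he : e ∈ completePartiteEdges n r t)
    {v : Fin n × Fin t} (hv : v ∈ e) :
    ∃ g : Fin n → Fin t, (∀ a ∉ (e.image Prod.fst).erase v.1, g a = v.2) ∧
      (e.image Prod.fst).image (fun a => (a, g a)) = e := by
  have hcoord : ∀ a, ∃ b, (a ∈ e.image Prod.fst → (a, b) ∈ e) ∧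
      (a ∉ (e.image Prod.fst).erase v.1 → b = v.2) := by
    intro a
    by_cases ha : a ∈ e.image Prod.fst
    · obtain ⟨u, hu, rfl⟩ := mem_image.1 ha
      refine ⟨u.2, fun _ => hu, fun hu₁ => ?_⟩
      have : u = v := by
        by_contra huv
        exact (mem_completePartiteEdges.1 he).2 u hu v hv huv (by simpa [ha] using hu₁)
      rw [this]
    · exact ⟨v.2, fun h => absurd h ha, fun _ => rfl⟩
  choose g hg using hcoord
  refine ⟨g, fun a ha => (hg a).2 ha, eq_of_subset_of_card_le (fun x hx => ?_) ?_⟩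
  · obtain ⟨a, ha, rfl⟩ := mem_image.1 hx
    exact (hg a).1 ha
  · rw [card_image_of_injective _ fun a b h => congrArg Prod.fst h,
      card_image_fst_of_mem he, (mem_completePartiteEdges.1 he).1]

lemma apply_eq_of_image_graph_eq {S : Finset (Fin n)} {g g' : Fin n → Fin t}
    (h : S.image (fun a => (a, g a)) = S.image (fun a => (a, g' a))) {a : Fin n} (ha : a ∈ S) :
    g a = g' a := by
  obtain ⟨b, -, hb⟩ := mem_image.1 (h ▸ mem_image_of_mem (fun a => (a, g a)) ha)
  simp only [Prod.mk.injEq] at hb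
  rw [← hb.2, hb.1]

lemma card_filter_mem_image_fst_eq {S : Finset (Fin n)} (hS : S.card = r)
    {v : Fin n × Fin t} (hv : v.1 ∈ S) :
    #{e ∈ completePartiteEdges n r t | v ∈ e ∧ e.image Prod.fst = S} = t ^ (r - 1) := by
  set A := Fintype.piFinset fun a => if a ∈ S.erase v.1 then (univ : Finset (Fin t)) else {v.2}
  have hA : #A = t ^ (r - 1) := by
    simp only [A, Fintype.card_piFinset, apply_ite card, card_univ, Fintype.card_fin,
      card_singleton]
    rw [prod_ite_mem, univ_inter, prod_const, card_erase_of_mem hv, hS]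
  rw [← hA]
  symm
  have hA_apply {g} (hg : g ∈ A) {a} (ha : a ∉ S.erase v.1) : g a = v.2 := by
    simpa [A, ha] using Fintype.mem_piFinset.1 hg a
  refine card_nbij (fun g => S.image fun a => (a, g a)) (fun g hg => ?_) (fun g hg g' hg' h => ?_)
    (fun e he => ?_)
  · have hg_v : g v.1 = v.2 := hA_apply hg (notMem_erase _ _)
    refine mem_filter.2 ⟨image_graph_mem_completePartiteEdges hS g, ?_, ?_⟩
    · exact mem_image.2 ⟨v.1, hv, by rw [hg_v]⟩
    · rw [image_image]
      exact image_id'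
  · funext a
    by_cases ha : a ∈ S.erase v.1
    · exact apply_eq_of_image_graph_eq h (mem_of_mem_erase ha)
    · rw [hA_apply hg ha, hA_apply hg' ha]
  · obtain ⟨heK, hve, rfl⟩ := mem_filter.1 (mem_coe.1 he)
    obtain ⟨g, hg, hge⟩ := exists_image_graph_eq heK hve
    refine ⟨g, Fintype.mem_piFinset.2 fun a => ?_, hge⟩
    split_ifs with ha
    · exact mem_univ _
    · exact mem_singleton.2 (hg a ha)

def familyWeight (𝒮 : Finset (Finset (Fin n))) (e : Finset (Fin n × Fin t)) : ℕ :=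
  if e.image Prod.fst ∈ 𝒮 then 2 else 1

lemma sigmaE_familyWeight {𝒮 : Finset (Finset (Fin n))} (h𝒮 : ∀ S ∈ 𝒮, S.card = r)
    (v : Fin n × Fin t) :
    sigmaE (completePartiteEdges n r t) (familyWeight 𝒮) v =
      #{e ∈ completePartiteEdges n r t | v ∈ e} + t ^ (r - 1) * familyDegree 𝒮 v.1 := by
  have hsplit : sigmaE (completePartiteEdges n r t) (familyWeight 𝒮) v =
      #{e ∈ completePartiteEdges n r t | v ∈ e} +
        #{e ∈ completePartiteEdges n r t | v ∈ e ∧ e.image Prod.fst ∈ 𝒮} := by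
    rw [sigmaE_eq_sum, card_eq_sum_ones, ← filter_filter, card_filter, ← sum_add_distrib]
    refine sum_congr rfl fun e _ => ?_
    unfold familyWeight
    split_ifs <;> rfl
  have hfiber : ∀ S ∈ {S ∈ 𝒮 | v.1 ∈ S},
      #{e ∈ {e ∈ completePartiteEdges n r t | v ∈ e ∧ e.image Prod.fst ∈ 𝒮} |
        e.image Prod.fst = S} =
        t ^ (r - 1) := by
    intro S hS
    obtain ⟨hS𝒮, hvS⟩ := mem_filter.1 hS
    rw [← card_filter_mem_image_fst_eq (h𝒮 S hS𝒮) hvS, filter_filter]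
    congr 1
    exact filter_congr fun e _ => ⟨fun h => ⟨h.1.1, h.2⟩, fun h => ⟨⟨h.1, h.2 ▸ hS𝒮⟩, h.2⟩⟩
  rw [hsplit]
  congr 1
  rw [card_eq_sum_card_fiberwise (f := image Prod.fst) (t := {S ∈ 𝒮 | v.1 ∈ S}),
    sum_congr rfl hfiber, sum_const, smul_eq_mul, mul_comm, familyDegree]
  intro e he
  obtain ⟨-, hve, hfst⟩ := mem_filter.1 he
  exact mem_filter.2 ⟨hfst, mem_image_of_mem _ hve⟩

lemma hasNSDEdgeWeighting_two_of_familyDegree_ne {𝒮 : Finset (Finset (Fin n))}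
    (h𝒮 : ∀ S ∈ 𝒮, S.card = r)
    (hsep : ∀ T : Finset (Fin n), T.card = r →
      ∃ a ∈ T, ∃ b ∈ T, familyDegree 𝒮 a ≠ familyDegree 𝒮 b) :
    HasNSDEdgeWeighting (completePartiteEdges n r t) 2 := by
  refine ⟨familyWeight 𝒮, fun e _ => ?_, fun e he _ => ?_⟩
  · unfold familyWeight
    split_ifs <;> norm_num
  obtain ⟨a, ha, b, hb, hab⟩ := hsep _ (card_image_fst_of_mem he)
  obtain ⟨u, hu, rfl⟩ := mem_image.1 ha
  obtain ⟨z, hz, rfl⟩ := mem_image.1 hb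
  refine ⟨u, hu, z, hz, fun h => hab ?_⟩
  rw [sigmaE_familyWeight h𝒮, sigmaE_familyWeight h𝒮,
    completePartiteEdges_isVertexTransitive.card_filter_mem_eq u z] at h
  exact Nat.eq_of_mul_eq_mul_left (pow_pos u.2.pos _) (Nat.add_left_cancel h)

end CompletePartite

lemma hasNSDEdgeWeighting_completePartiteEdges_two {n r t : ℕ} (hr : 3 ≤ r) (hn : r + 3 ≤ n) :
    HasNSDEdgeWeighting (completePartiteEdges n r t) 2 :=
  hasNSDEdgeWeighting_two_of_familyDegree_ne (𝒮 := halfGraphFamily n (n + 2 - r))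
    (fun _ hS => by rw [card_of_mem_halfGraphFamily hS]; omega)
    (fun _ hT => exists_familyDegree_halfGraphFamily_ne (by omega) (by omega) (by omega))

lemma isLeast_two {P : ℕ → Prop} (h₁ : ¬ P 1) (h₂ : P 2) : IsLeast {k | 0 < k ∧ P k} 2 :=
  ⟨⟨two_pos, h₂⟩, fun k ⟨hk, hPk⟩ => by
    by_contra! h
    obtain rfl : k = 1 := by omega
    exact h₁ hPk⟩

/-- For `r ≥ 3`, `t ≥ 1` and `n > 2(r-1)²`,
`χ^e(K_n^r(t)) = χ^ve(K_n^r(t)) = χ^ven(K_n^r(t)) = 2`. -/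
theorem chi_completePartiteHypergraph (n r t : ℕ) (hr : 3 ≤ r) (ht : 1 ≤ t)
    (hn : 2 * (r - 1) ^ 2 < n) :
    IsLeast {k : ℕ | 0 < k ∧ HasNSDEdgeWeighting (completePartiteEdges n r t) k} 2 ∧
    IsLeast {k : ℕ | 0 < k ∧ HasNSDTotalWeightingVE (completePartiteEdges n r t) k} 2 ∧
    IsLeast {k : ℕ | 0 < k ∧ HasNFSDTotalWeighting (completePartiteEdges n r t) k} 2 := by
  have hrn : r + 3 ≤ n := by
    have : r + 2 ≤ 2 * (r - 1) ^ 2 := by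
      rw [sq]
      nlinarith [Nat.sub_add_cancel (show 1 ≤ r by omega)]
    omega
  have hK := completePartiteEdges_isVertexTransitive (n := n) (r := r) (t := t)
  obtain ⟨e, he, he_card⟩ := exists_mem_completePartiteEdges (n := n) (r := r) (by omega) ht
  have hK₂ : ∃ e ∈ completePartiteEdges n r t, 2 ≤ e.card := ⟨e, he, by omega⟩
  have hW := hasNSDEdgeWeighting_completePartiteEdges_two (t := t) hr hrn
  exact ⟨isLeast_two (hK.not_hasNSDEdgeWeighting_one hK₂) hW,
    isLeast_two (hK.not_hasNSDTotalWeightingVE_one hK₂) (hW.hasNSDTotalWeightingVE one_le_two),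
    isLeast_two (hK.not_hasNFSDTotalWeighting_one hK₂) (hK.hasNFSDTotalWeighting hW one_le_two)⟩
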